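/- Let P ⊆ ℝ^d be a full-dimensional, Minkowski indecomposable lattice polytope. Then P is nearly Gorenstein if and only if P is Gorenstein. -/

import Mathlib

open Set Pointwise

/-- The set of lattice points of `ℝ^d`. -/
def latticePoints (d : ℕ) : Set (Fin d → ℝ) :=
  {x | ∀ i, ∃ z : ℤ, x i = (z : ℝ)}

/-- A lattice polytope: the convex hull of a finite set of lattice points. -/
def IsLatticePolytope {d : ℕ} (P : Set (Fin d → ℝ)) : Prop :=
  ∃ V : Finset (Fin d → ℝ), (V : Set (Fin d → ℝ)) ⊆ latticePoints d ∧
    P = convexHull ℝ (V : Set (Fin d → ℝ))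

/-- The natural pairing of an integral linear functional with a point of `ℝ^d`. -/
def pairing {d : ℕ} (n : Fin d → ℤ) (x : Fin d → ℝ) : ℝ :=
  ∑ i, (n i : ℝ) * x i

/-- `P = {x | n_F(x) ≥ -h_F}` is an irredundant presentation with primitive
integral inner normals, i.e. the facet presentation of `P`. -/
def IsFacetPresentation {d m : ℕ} (P : Set (Fin d → ℝ))
    (n : Fin m → Fin d → ℤ) (h : Fin m → ℤ) : Prop :=
  P = {x | ∀ i, pairing (n i) x ≥ -(h i : ℝ)} ∧
  (∀ i, Finset.univ.gcd (n i) = 1) ∧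
  (∀ i, ∃ x : Fin d → ℝ, pairing (n i) x < -(h i : ℝ) ∧
    ∀ j, j ≠ i → pairing (n j) x ≥ -(h j : ℝ))

/-- `a` is the codegree of `P`: the least `k ≥ 1` such that `int(kP)` contains
a lattice point. -/
def IsCodegree {d : ℕ} (P : Set (Fin d → ℝ)) (a : ℕ) : Prop :=
  1 ≤ a ∧ (interior ((a : ℝ) • P) ∩ latticePoints d).Nonempty ∧
    ∀ k : ℕ, 1 ≤ k → (interior ((k : ℝ) • P) ∩ latticePoints d).Nonempty → a ≤ k

/-- The floor polytope `⌊R⌋ = conv(int(R) ∩ ℤ^d)`. -/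
def floorPoly {d : ℕ} (R : Set (Fin d → ℝ)) : Set (Fin d → ℝ) :=
  convexHull ℝ (interior R ∩ latticePoints d)

/-- The remainder polytope `{P} = conv{x ∈ ℤ^d | n_F(x) ≥ (a-1)h_F - 1}`,
defined in terms of the facet presentation data and the codegree `a`. -/
def remPoly {d m : ℕ} (n : Fin m → Fin d → ℤ) (h : Fin m → ℤ) (a : ℕ) :
    Set (Fin d → ℝ) :=
  convexHull ℝ {x | x ∈ latticePoints d ∧
    ∀ i, pairing (n i) x ≥ ((a : ℝ) - 1) * (h i : ℝ) - 1}

/-- The cone `C_P ⊆ ℝ^d × ℝ` over `P`, in terms of the facet presentation. -/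
def coneOver {d m : ℕ} (n : Fin m → Fin d → ℤ) (h : Fin m → ℤ) :
    Set ((Fin d → ℝ) × ℝ) :=
  {p | ∀ i, pairing (n i) p.1 ≥ -(p.2 * (h i : ℝ))}

/-- The interior `int(C_P)` of the cone over `P`. -/
def intCone {d m : ℕ} (n : Fin m → Fin d → ℤ) (h : Fin m → ℤ) :
    Set ((Fin d → ℝ) × ℝ) :=
  {p | ∀ i, pairing (n i) p.1 > -(p.2 * (h i : ℝ))}

/-- The anticanonical set `ant(C_P)` of the cone over `P`. -/
def antCone {d m : ℕ} (n : Fin m → Fin d → ℤ) (h : Fin m → ℤ) :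
    Set ((Fin d → ℝ) × ℝ) :=
  {p | ∀ i, pairing (n i) p.1 ≥ -(p.2 * (h i : ℝ)) - 1}

/-- Lattice points of `ℝ^d × ℝ = ℝ^{d+1}`. -/
def latticePairs (d : ℕ) : Set ((Fin d → ℝ) × ℝ) :=
  {p | p.1 ∈ latticePoints d ∧ ∃ z : ℤ, p.2 = (z : ℝ)}

/-- The nearly Gorenstein condition with respect to a given facet presentation:
`(C_P ∩ ℤ^{d+1}) \ {0} ⊆ (int(C_P) ∩ ℤ^{d+1}) + (ant(C_P) ∩ ℤ^{d+1})`. -/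
def NGIncl {d m : ℕ} (n : Fin m → Fin d → ℤ) (h : Fin m → ℤ) : Prop :=
  (coneOver n h ∩ latticePairs d) \ {(0 : (Fin d → ℝ) × ℝ)} ⊆
    (intCone n h ∩ latticePairs d) + (antCone n h ∩ latticePairs d)

/-- A full-dimensional lattice polytope is nearly Gorenstein if the nearly
Gorenstein inclusion holds for its facet presentation. -/
def NearlyGorenstein {d : ℕ} (P : Set (Fin d → ℝ)) : Prop :=
  ∃ (m : ℕ) (n : Fin m → Fin d → ℤ) (h : Fin m → ℤ),
    IsFacetPresentation P n h ∧ NGIncl n h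

/-- The polar dual `Q* = {y | y(x) ≥ -1 for all x ∈ Q}`. -/
def polarDual {d : ℕ} (Q : Set (Fin d → ℝ)) : Set (Fin d → ℝ) :=
  {y | ∀ x ∈ Q, (∑ i, y i * x i) ≥ -1}

/-- A reflexive polytope: a lattice polytope with `0` in its interior whose
polar dual is again a lattice polytope. -/
def IsReflexive {d : ℕ} (Q : Set (Fin d → ℝ)) : Prop :=
  IsLatticePolytope Q ∧ (0 : Fin d → ℝ) ∈ interior Q ∧
    IsLatticePolytope (polarDual Q)

/-- A Gorenstein polytope: some dilate `kP`, translated by a lattice vector,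
is reflexive. -/
def IsGorenstein {d : ℕ} (P : Set (Fin d → ℝ)) : Prop :=
  ∃ (k : ℕ) (w : Fin d → ℝ), 1 ≤ k ∧ w ∈ latticePoints d ∧
    IsReflexive ((fun x => x - w) '' ((k : ℝ) • P))

/-- The integer decomposition property. -/
def IsIDP {d : ℕ} (P : Set (Fin d → ℝ)) : Prop :=
  ∀ k : ℕ, 1 ≤ k → ∀ x ∈ ((k : ℝ) • P) ∩ latticePoints d,
    ∃ y : Fin k → Fin d → ℝ, (∀ j, y j ∈ P ∩ latticePoints d) ∧ x = ∑ j, y j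

/-- Minkowski indecomposability of a lattice polytope. -/
def IsIndecomposable {d : ℕ} (P : Set (Fin d → ℝ)) : Prop :=
  (¬ ∃ p : Fin d → ℝ, P = {p}) ∧
  ∀ P₁ P₂ : Set (Fin d → ℝ), IsLatticePolytope P₁ → IsLatticePolytope P₂ →
    P = P₁ + P₂ → (∃ p, P₁ = {p}) ∨ (∃ p, P₂ = {p})

/-- A `(0,1)`-polytope: the convex hull of a set of `(0,1)`-vectors. -/
def Is01Polytope {d : ℕ} (P : Set (Fin d → ℝ)) : Prop :=
  ∃ V : Finset (Fin d → ℝ), (∀ v ∈ V, ∀ i, v i = 0 ∨ v i = 1) ∧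
    P = convexHull ℝ (V : Set (Fin d → ℝ))


/-!
Call a lattice point `(w, k)` of the cone over `P` a Gorenstein point of the facet presentation
if `n_F(w) + k h_F = 1` for every facet `F`; boundedness of `P` forces `k ≥ 1`.

Given a Gorenstein point, `kP - w = {x | n_F(x) ≥ -1}` has polar dual `conv(0, n_F)`, so `P` is
Gorenstein, and every lattice point `p` of the cone splits as `(w, k) + (p - (w, k))`, interior plus
anticanonical, so `P` is nearly Gorenstein. Conversely, if `kP - w` is reflexive, the nonzero
vertices `u` of its dual attain the minimum `-1` on `kP - w` at a point `kx - w` with `x` a vertex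
of `P`, so `u(w - kx) = 1`: the `u` are primitive normals of `P` with Gorenstein point `(w, k)`,
and discarding redundant ones leaves the facet presentation.

For nearly Gorenstein `P`, write `(v, 1) = (y_v, b_v) + (z_v, 1 - b_v)` for each vertex `v`,
interior plus anticanonical; integrality sharpens the first part to `n_F(y_v) ≥ 1 - b_v h_F`.
As `P` is bounded, a vector on which every `n_F` is nonnegative vanishes. If `b_v < b_u`, then
`y = y_v + (b_u - 1 - b_v) v` has `n_F(y) ≥ 1 - (b_u - 1) h_F` while `n_F(z_u) ≥ (b_u - 1) h_F - 1`,
so `y + z_u = 0`, forcing equality: `(y, b_u - 1)` is a Gorenstein point. If all `b_v` equal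
`b`, then `P = conv(y_v) + conv(z_v)`, so one of the two summands is a point; every facet contains
a vertex, which forces that point `y` (resp. `z`) to give the Gorenstein point `(y, b)`
(resp. `(-z, b - 1)`).
-/

open Filter Topology

lemma mem_image_sub_smul_iff {E : Type*} [AddCommGroup E] [Module ℝ E] {S : Set E} {c : ℝ}
    (hc : c ≠ 0) {w x : E} : x ∈ (fun y => y - w) '' (c • S) ↔ c⁻¹ • (x + w) ∈ S := by
  constructor
  · rintro ⟨y, hy, rfl⟩
    simpa using (mem_smul_set_iff_inv_smul_mem₀ hc _ _).1 hy
  · exact fun hx => ⟨x + w, (mem_smul_set_iff_inv_smul_mem₀ hc _ _).2 hx, add_sub_cancel_right x w⟩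

lemma convexHull_eq_convexHull_add_convexHull {E : Type*} [AddCommGroup E] [Module ℝ E]
    {V Y Z : Set E} (hV : V ⊆ Y + Z) (hYZ : Y + Z ⊆ convexHull ℝ V) :
    convexHull ℝ V = convexHull ℝ Y + convexHull ℝ Z := by
  rw [← convexHull_add]
  exact Subset.antisymm (convexHull_mono hV) (convexHull_min hYZ (convex_convexHull ℝ V))

lemma Finset.exists_subset_biInter_eq_irredundant {α ι : Type*} [DecidableEq ι] (S : Finset ι)
    (H : ι → Set α) : ∃ T ⊆ S, (⋂ i ∈ T, H i) = (⋂ i ∈ S, H i) ∧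
      ∀ i ∈ T, ¬ (⋂ j ∈ T.erase i, H j) ⊆ H i := by
  induction S using Finset.strongInduction with
  | H S ih =>
    by_cases hirr : ∀ i ∈ S, ¬ (⋂ j ∈ S.erase i, H j) ⊆ H i
    · exact ⟨S, subset_rfl, rfl, hirr⟩
    push Not at hirr
    obtain ⟨i, hi, hsub⟩ := hirr
    obtain ⟨T, hTS, hT, hirrT⟩ := ih _ (Finset.erase_ssubset hi)
    refine ⟨T, hTS.trans (Finset.erase_subset i S), hT.trans ?_, hirrT⟩
    conv_rhs => rw [← Finset.insert_erase hi, Finset.set_biInter_insert]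
    exact (Set.inter_eq_right.2 hsub).symm

lemma Finset.gcd_eq_one_of_sum_mul_eq_one {ι : Type*} {s : Finset ι} {f a : ι → ℤ}
    (h : ∑ i ∈ s, f i * a i = 1) : s.gcd f = 1 := by
  have hdvd : s.gcd f ∣ 1 := h ▸ Finset.dvd_sum fun i hi => (Finset.gcd_dvd hi).mul_right _
  exact Int.eq_one_of_dvd_one (Int.nonneg_of_normalize_eq_self Finset.normalize_gcd) hdvd

lemma eq_zero_of_forall_add_smul_mem {E : Type*} [NormedAddCommGroup E] [NormedSpace ℝ E]
    {S : Set E} (hS : Bornology.IsBounded S) {x u : E} (h : ∀ s : ℝ, 0 ≤ s → x + s • u ∈ S) :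
    u = 0 := by
  obtain ⟨C, hC⟩ := isBounded_iff_forall_norm_le.1 hS
  by_contra hu
  have hpos : 0 < ‖u‖ := norm_pos_iff.2 hu
  set s := (‖x‖ + C + 1) / ‖u‖
  have hs : 0 ≤ s :=
    div_nonneg (by linarith [norm_nonneg x, hC x (by simpa using h 0 le_rfl)]) hpos.le
  have hsu : s * ‖u‖ = ‖x‖ + C + 1 := div_mul_cancel₀ _ hpos.ne'
  have hle := norm_sub_le (x + s • u) x
  rw [add_sub_cancel_left, norm_smul, Real.norm_of_nonneg hs] at hle
  linarith [hC _ (h s hs)]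

section Lattice

variable {d : ℕ}

def latticeSubgroup (d : ℕ) : AddSubgroup (Fin d → ℝ) where
  carrier := latticePoints d
  add_mem' {x y} hx hy i := by
    obtain ⟨a, ha⟩ := hx i
    obtain ⟨b, hb⟩ := hy i
    exact ⟨a + b, by simp [ha, hb]⟩
  zero_mem' _ := ⟨0, by simp⟩
  neg_mem' {x} hx i := by
    obtain ⟨a, ha⟩ := hx i
    exact ⟨-a, by simp [ha]⟩

lemma intCast_smul_mem_latticePoints (t : ℤ) {x : Fin d → ℝ} (hx : x ∈ latticePoints d) :
    (t : ℝ) • x ∈ latticePoints d := by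
  rw [Int.cast_smul_eq_zsmul]
  exact (latticeSubgroup d).zsmul_mem hx t

lemma exists_eq_intCast_of_mem_latticePoints {x : Fin d → ℝ} (hx : x ∈ latticePoints d) :
    ∃ z : Fin d → ℤ, x = fun i => (z i : ℝ) := by
  choose z hz using hx
  exact ⟨z, funext hz⟩

lemma pairing_eq_dotProduct (n : Fin d → ℤ) (x : Fin d → ℝ) :
    pairing n x = (fun i => (n i : ℝ)) ⬝ᵥ x := rfl

@[simp] lemma pairing_add (n : Fin d → ℤ) (x y : Fin d → ℝ) :
    pairing n (x + y) = pairing n x + pairing n y := dotProduct_add _ _ _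

@[simp] lemma pairing_sub (n : Fin d → ℤ) (x y : Fin d → ℝ) :
    pairing n (x - y) = pairing n x - pairing n y := dotProduct_sub _ _ _

@[simp] lemma pairing_neg (n : Fin d → ℤ) (x : Fin d → ℝ) :
    pairing n (-x) = -pairing n x := dotProduct_neg _ _

@[simp] lemma pairing_smul (n : Fin d → ℤ) (c : ℝ) (x : Fin d → ℝ) :
    pairing n (c • x) = c * pairing n x := dotProduct_smul _ _ _

@[simp] lemma pairing_zero (n : Fin d → ℤ) : pairing n 0 = 0 := dotProduct_zero _

lemma isLinearMap_pairing (n : Fin d → ℤ) : IsLinearMap ℝ (pairing n) :=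
  ⟨pairing_add n, pairing_smul n⟩

lemma exists_pairing_eq_intCast (n : Fin d → ℤ) {x : Fin d → ℝ} (hx : x ∈ latticePoints d) :
    ∃ c : ℤ, pairing n x = c := by
  obtain ⟨z, rfl⟩ := exists_eq_intCast_of_mem_latticePoints hx
  exact ⟨∑ i, n i * z i, by simp [pairing]⟩

lemma add_one_le_pairing {n : Fin d → ℤ} {x : Fin d → ℝ} (hx : x ∈ latticePoints d) {t : ℤ}
    (ht : (t : ℝ) < pairing n x) : (t : ℝ) + 1 ≤ pairing n x := by
  obtain ⟨c, hc⟩ := exists_pairing_eq_intCast n hx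
  rw [hc] at ht ⊢
  exact_mod_cast Int.add_one_le_iff.2 (Int.cast_lt.1 ht)

lemma exists_min_pairing_convexHull {V : Finset (Fin d → ℝ)} (hV : V.Nonempty) (n : Fin d → ℤ) :
    ∃ v ∈ V, ∀ x ∈ convexHull ℝ (V : Set (Fin d → ℝ)), pairing n v ≤ pairing n x := by
  obtain ⟨v, hv, hmin⟩ := V.exists_min_image (pairing n) hV
  exact ⟨v, hv, fun x hx => convexHull_min hmin (convex_halfSpace_ge (isLinearMap_pairing n) _) hx⟩

lemma gcd_eq_one_of_pairing_eq_one {n : Fin d → ℤ} {a : Fin d → ℝ} (ha : a ∈ latticePoints d)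
    (h : pairing n a = 1) : Finset.univ.gcd n = 1 := by
  obtain ⟨z, rfl⟩ := exists_eq_intCast_of_mem_latticePoints ha
  have hz : ((∑ i, n i * z i : ℤ) : ℝ) = 1 := by simpa [pairing] using h
  exact Finset.gcd_eq_one_of_sum_mul_eq_one (by exact_mod_cast hz)

end Lattice

section Polar

variable {d : ℕ}

lemma convex_polarDual (Q : Set (Fin d → ℝ)) : Convex ℝ (polarDual Q) := by
  simp only [polarDual, ofPred_forall]
  exact convex_iInter₂ fun x _ =>
    convex_halfSpace_ge ⟨fun y z => add_dotProduct y z x, fun c y => smul_dotProduct c y x⟩ _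

lemma polarDual_convexHull (S : Set (Fin d → ℝ)) : polarDual (convexHull ℝ S) = polarDual S := by
  refine Subset.antisymm (fun y hy x hx => hy x (subset_convexHull ℝ S hx)) fun y hy x hx => ?_
  exact convexHull_min (t := {x | -1 ≤ y ⬝ᵥ x}) hy
    (convex_halfSpace_ge ⟨dotProduct_add y, fun c x => dotProduct_smul c y x⟩ _) hx

lemma exists_mem_polarDual_dotProduct_lt {K : Set (Fin d → ℝ)} (hK : Convex ℝ K)
    (hKc : IsClosed K) (h0 : (0 : Fin d → ℝ) ∈ K) {y : Fin d → ℝ} (hy : y ∉ K) :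
    ∃ x ∈ polarDual K, x ⬝ᵥ y < -1 := by
  obtain ⟨f, s, hfy, hfK⟩ := geometric_hahn_banach_point_closed hK hKc hy
  set g : Fin d → ℝ := fun i => f fun j => if i = j then 1 else 0
  have hf : ∀ x, f x = g ⬝ᵥ x := fun x => by
    rw [← ContinuousLinearMap.coe_coe, LinearMap.pi_apply_eq_sum_univ]
    exact Finset.sum_congr rfl fun i _ => by simp [g, mul_comm]
  have hs : s < 0 := by simpa [hf] using hfK 0 h0
  -- rescale the separating functional so that it is `> -1` on `K`
  refine ⟨(-s⁻¹) • g, fun x hx => ?_, ?_⟩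
  · have := hfK x hx
    rw [hf] at this
    show -1 ≤ (-s⁻¹) • g ⬝ᵥ x
    rw [smul_dotProduct, smul_eq_mul]
    nlinarith [mul_inv_cancel₀ hs.ne, inv_lt_zero.2 hs]
  · rw [hf] at hfy
    rw [smul_dotProduct, smul_eq_mul]
    nlinarith [mul_inv_cancel₀ hs.ne, inv_lt_zero.2 hs]

lemma polarDual_polarDual_subset {Q : Set (Fin d → ℝ)} (hQ : Convex ℝ Q) (hQc : IsClosed Q)
    (h0 : (0 : Fin d → ℝ) ∈ Q) : polarDual (polarDual Q) ⊆ Q := by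
  intro z hz
  by_contra hzQ
  obtain ⟨x, hx, hxz⟩ := exists_mem_polarDual_dotProduct_lt hQ hQc h0 hzQ
  have : -1 ≤ z ⬝ᵥ x := hz x hx
  rw [dotProduct_comm] at this
  linarith

lemma mem_of_polarDual_eq_convexHull {Q V : Set (Fin d → ℝ)} (hQ : Convex ℝ Q)
    (hQc : IsClosed Q) (h0 : (0 : Fin d → ℝ) ∈ Q) (hdual : polarDual Q = convexHull ℝ V)
    {z : Fin d → ℝ} (hz : ∀ v ∈ V, v ≠ 0 → -1 ≤ v ⬝ᵥ z) : z ∈ Q := by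
  refine polarDual_polarDual_subset hQ hQc h0 ?_
  rw [hdual, polarDual_convexHull]
  intro v hv
  show -1 ≤ z ⬝ᵥ v
  rw [dotProduct_comm]
  by_cases hv0 : v = 0
  · simp [hv0]
  exact hz v hv hv0

lemma polarDual_setOf_forall_neg_one_le {ι : Type*} [Finite ι] (a : ι → Fin d → ℝ) :
    polarDual {x | ∀ i, -1 ≤ a i ⬝ᵥ x} = convexHull ℝ (insert 0 (range a)) := by
  set K := convexHull ℝ (insert 0 (range a))
  refine Subset.antisymm (fun y hy => ?_) ?_
  · by_contra hyK
    have hKc : IsClosed K := (((finite_range a).insert 0).isCompact_convexHull ℝ).isClosed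
    obtain ⟨x, hx, hxy⟩ := exists_mem_polarDual_dotProduct_lt (convex_convexHull ℝ _) hKc
      (subset_convexHull ℝ _ (mem_insert 0 _)) hyK
    have hxmem : x ∈ {x | ∀ i, -1 ≤ a i ⬝ᵥ x} := fun i => by
      rw [dotProduct_comm]
      exact hx _ (subset_convexHull ℝ _ (mem_insert_of_mem 0 (mem_range_self i)))
    have : -1 ≤ y ⬝ᵥ x := hy x hxmem
    rw [dotProduct_comm] at this
    linarith
  · refine convexHull_min ?_ (convex_polarDual _)
    rintro _ (rfl | ⟨i, rfl⟩) x hx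
    · simp
    · exact hx i

lemma exists_dotProduct_neg_of_zero_mem_interior {Q : Set (Fin d → ℝ)}
    (h0 : (0 : Fin d → ℝ) ∈ interior Q) {v : Fin d → ℝ} (hv : v ≠ 0) : ∃ q ∈ Q, v ⬝ᵥ q < 0 := by
  have hlim : Tendsto (fun ε : ℝ => -ε • v) (𝓝[>] 0) (𝓝 0) :=
    ((continuous_neg.smul continuous_const).tendsto' 0 0 (by simp)).mono_left nhdsWithin_le_nhds
  obtain ⟨ε, hεQ, hε⟩ :=
    ((hlim.eventually (mem_interior_iff_mem_nhds.1 h0)).and self_mem_nhdsWithin).exists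
  have hvv : 0 < v ⬝ᵥ v := by simpa using Matrix.dotProduct_star_self_pos_iff.2 hv
  refine ⟨_, hεQ, ?_⟩
  rw [dotProduct_smul, smul_eq_mul]
  exact mul_neg_of_neg_of_pos (neg_lt_zero.2 hε) hvv

lemma zero_mem_interior_setOf_forall_neg_one_le {ι : Type*} [Finite ι]
    (a : ι → Fin d → ℝ) : (0 : Fin d → ℝ) ∈ interior {x | ∀ i, -1 ≤ a i ⬝ᵥ x} := by
  refine mem_interior.2 ⟨{x | ∀ i, -1 < a i ⬝ᵥ x}, fun x hx i => (hx i).le, ?_, by simp⟩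
  simp only [ofPred_forall]
  exact isOpen_iInter_of_finite fun i =>
    isOpen_lt continuous_const (continuous_const.dotProduct continuous_id)

end Polar

lemma IsLatticePolytope.isBounded {d : ℕ} {P : Set (Fin d → ℝ)} (hP : IsLatticePolytope P) :
    Bornology.IsBounded P := by
  obtain ⟨V, -, rfl⟩ := hP
  exact (V.finite_toSet.isCompact_convexHull ℝ).isBounded

lemma IsLatticePolytope.image_smul_sub {d : ℕ} {P : Set (Fin d → ℝ)} (hP : IsLatticePolytope P)
    (k : ℕ) {w : Fin d → ℝ} (hw : w ∈ latticePoints d) :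
    IsLatticePolytope ((fun x => x - w) '' ((k : ℝ) • P)) := by
  classical
  obtain ⟨V, hV, rfl⟩ := hP
  let f : (Fin d → ℝ) →ᵃ[ℝ] (Fin d → ℝ) :=
    ((k : ℝ) • LinearMap.id).toAffineMap - AffineMap.const ℝ _ w
  have hf : ∀ x, f x = (k : ℝ) • x - w := fun x => by simp [f]
  refine ⟨V.image f, ?_, ?_⟩
  · intro _ hx
    rw [Finset.coe_image] at hx
    obtain ⟨v, hv, rfl⟩ := hx
    rw [hf]
    exact (latticeSubgroup d).sub_mem
      (by exact_mod_cast intCast_smul_mem_latticePoints k (hV hv)) hw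
  · rw [Finset.coe_image, ← f.image_convexHull, ← image_smul, image_image]
    exact image_congr fun x _ => (hf x).symm

section Presentation

variable {d m : ℕ} {n : Fin m → Fin d → ℤ} {h : Fin m → ℤ}

def polyhedron (n : Fin m → Fin d → ℤ) (h : Fin m → ℤ) : Set (Fin d → ℝ) :=
  {x | ∀ i, pairing (n i) x ≥ -(h i : ℝ)}

def IsGorensteinPoint (n : Fin m → Fin d → ℤ) (h : Fin m → ℤ) (w : Fin d → ℝ) (k : ℤ) : Prop :=
  w ∈ latticePoints d ∧ ∀ i, pairing (n i) w + k * h i = 1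

lemma eq_zero_of_forall_pairing_nonneg (hb : Bornology.IsBounded (polyhedron n h))
    {x : Fin d → ℝ} (hx : x ∈ polyhedron n h) {u : Fin d → ℝ} (hu : ∀ i, 0 ≤ pairing (n i) u) :
    u = 0 :=
  eq_zero_of_forall_add_smul_mem (x := x) hb fun s hs i => by
    simp only [pairing_add, pairing_smul]
    linarith [hx i, mul_nonneg hs (hu i)]

lemma nonempty_fin_of_isBounded (hd : 1 ≤ d) (hb : Bornology.IsBounded (polyhedron n h))
    {x : Fin d → ℝ} (hx : x ∈ polyhedron n h) : Nonempty (Fin m) := by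
  by_contra hm
  rw [not_nonempty_iff] at hm
  have := congr_fun (eq_zero_of_forall_pairing_nonneg hb hx (u := fun _ => 1) isEmptyElim) ⟨0, hd⟩
  simp at this

lemma IsGorensteinPoint.one_le (hd : 1 ≤ d) (hb : Bornology.IsBounded (polyhedron n h))
    {x : Fin d → ℝ} (hx : x ∈ polyhedron n h) {w : Fin d → ℝ} {k : ℤ}
    (hg : IsGorensteinPoint n h w k) : 1 ≤ k := by
  by_contra! hk
  have hk' : (k : ℝ) ≤ 0 := by exact_mod_cast (by omega : k ≤ 0)
  -- otherwise `w - k x` is a nonzero direction of recession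
  have hpos : ∀ i, 1 ≤ pairing (n i) (w - (k : ℝ) • x) := fun i => by
    simp only [pairing_sub, pairing_smul]
    nlinarith [hg.2 i,
      mul_nonneg (neg_nonneg.2 hk') (by linarith [hx i] : 0 ≤ pairing (n i) x + h i)]
  obtain ⟨i⟩ := nonempty_fin_of_isBounded hd hb hx
  have h0 := eq_zero_of_forall_pairing_nonneg hb hx fun i => zero_le_one.trans (hpos i)
  have := hpos i
  rw [h0, pairing_zero] at this
  norm_num at this

lemma IsGorensteinPoint.image_smul_sub_eq {w : Fin d → ℝ} {k : ℤ} (hk : 0 < k)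
    (hg : IsGorensteinPoint n h w k) :
    (fun x => x - w) '' ((k : ℝ) • polyhedron n h) =
      {x | ∀ i, -1 ≤ (fun j => (n i j : ℝ)) ⬝ᵥ x} := by
  have hk' : (0 : ℝ) < k := by exact_mod_cast hk
  ext x
  rw [mem_image_sub_smul_iff hk'.ne']
  refine forall_congr' fun i => ?_
  rw [← pairing_eq_dotProduct, pairing_smul, pairing_add, ge_iff_le, le_inv_mul_iff₀ hk']
  constructor <;> intro <;> linarith [hg.2 i]

theorem IsGorensteinPoint.isGorenstein (hd : 1 ≤ d) (hP : IsLatticePolytope (polyhedron n h))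
    {x : Fin d → ℝ} (hx : x ∈ polyhedron n h) {w : Fin d → ℝ} {k : ℤ}
    (hg : IsGorensteinPoint n h w k) : IsGorenstein (polyhedron n h) := by
  classical
  have hk := hg.one_le hd hP.isBounded hx
  obtain ⟨k, rfl⟩ := Int.eq_ofNat_of_zero_le (zero_le_one.trans hk)
  have hQ := hg.image_smul_sub_eq (by omega)
  push_cast at hQ
  refine ⟨k, w, by omega, hg.1, hP.image_smul_sub k hg.1, ?_, ?_⟩
  · rw [hQ]
    exact zero_mem_interior_setOf_forall_neg_one_le _
  · rw [hQ, polarDual_setOf_forall_neg_one_le]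
    refine ⟨insert 0 (Finset.univ.image fun i j => (n i j : ℝ)), ?_, by simp⟩
    intro y hy
    simp only [Finset.coe_insert, Finset.coe_image, Finset.coe_univ, image_univ, mem_insert_iff,
      mem_range] at hy
    rcases hy with rfl | ⟨i, rfl⟩
    · exact fun _ => ⟨0, by simp⟩
    · exact fun j => ⟨n i j, rfl⟩

theorem IsGorensteinPoint.ngIncl {w : Fin d → ℝ} {k : ℤ} (hg : IsGorensteinPoint n h w k) :
    NGIncl n h := by
  rintro ⟨x, _⟩ ⟨⟨hx, hxl, c, rfl⟩, -⟩
  refine ⟨(w, k), ⟨fun i => ?_, hg.1, k, rfl⟩, (x - w, c - k),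
    ⟨fun i => ?_, (latticeSubgroup d).sub_mem hxl hg.1, c - k, by push_cast; rfl⟩, by simp⟩
  · show pairing (n i) w > -((k : ℝ) * h i)
    linarith [hg.2 i]
  · show pairing (n i) (x - w) ≥ -(((c : ℝ) - k) * h i) - 1
    rw [pairing_sub]
    linarith [hg.2 i, hx i]

end Presentation

section Existence

variable {d : ℕ}

theorem exists_isFacetPresentation {ι : Type*} [DecidableEq ι] (S : Finset ι)
    (N : ι → Fin d → ℤ) (H : ι → ℤ) (hN : ∀ i ∈ S, Finset.univ.gcd (N i) = 1) :
    ∃ (m : ℕ) (e : Fin m → ι), (∀ j, e j ∈ S) ∧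
      IsFacetPresentation {x | ∀ i ∈ S, pairing (N i) x ≥ -(H i : ℝ)}
        (fun j => N (e j)) (fun j => H (e j)) := by
  obtain ⟨T, hTS, hT, hirr⟩ :=
    S.exists_subset_biInter_eq_irredundant fun i => {x | pairing (N i) x ≥ -(H i : ℝ)}
  set e : Fin T.card → ι := fun j => T.equivFin.symm j
  have he : ∀ j, e j ∈ T := fun j => (T.equivFin.symm j).2
  have hforall : ∀ p : ι → Prop, (∀ i ∈ T, p i) ↔ ∀ j, p (e j) := fun p =>
    ⟨fun hp j => hp _ (he j), fun hp i hi => by simpa [e] using hp (T.equivFin ⟨i, hi⟩)⟩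
  refine ⟨T.card, e, fun j => hTS (he j), ?_, fun j => hN _ (hTS (he j)), fun j => ?_⟩
  · ext x
    have hx := congr(x ∈ $hT)
    simp only [mem_iInter, mem_ofPred_eq] at hx
    show (∀ i ∈ S, pairing (N i) x ≥ -(H i : ℝ)) ↔ ∀ j, pairing (N (e j)) x ≥ -(H (e j) : ℝ)
    rw [← hx]
    exact hforall fun i => pairing (N i) x ≥ -(H i : ℝ)
  · obtain ⟨x, hx, hxj⟩ := not_subset.1 (hirr _ (he j))
    simp only [mem_iInter, Finset.mem_erase] at hx
    refine ⟨x, not_le.1 hxj, fun i hij => hx _ ⟨fun h => hij ?_, he i⟩⟩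
    exact T.equivFin.symm.injective (Subtype.ext h)

variable {V : Finset (Fin d → ℝ)} {k : ℕ} {w : Fin d → ℝ}

lemma exists_height_of_mem_polarDual (hV : (V : Set (Fin d → ℝ)) ⊆ latticePoints d)
    (hVne : V.Nonempty) (hk : 0 < k) (hw : w ∈ latticePoints d)
    (h0 : (0 : Fin d → ℝ) ∈
      interior ((fun x => x - w) '' ((k : ℝ) • convexHull ℝ (V : Set (Fin d → ℝ)))))
    {N : Fin d → ℤ} (hN0 : N ≠ 0) (hN : (fun i => (N i : ℝ)) ∈
      polarDual ((fun x => x - w) '' ((k : ℝ) • convexHull ℝ (V : Set (Fin d → ℝ))))) :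
    ∃ H : ℤ, (∀ x ∈ convexHull ℝ (V : Set (Fin d → ℝ)), pairing N x ≥ -(H : ℝ)) ∧
      pairing N w + k * H = 1 ∧ ∃ a ∈ latticePoints d, pairing N a = 1 := by
  have hk' : (0 : ℝ) < k := by exact_mod_cast hk
  obtain ⟨x₀, hx₀, hmin⟩ := exists_min_pairing_convexHull hVne N
  obtain ⟨e, he⟩ := exists_pairing_eq_intCast N (hV hx₀)
  obtain ⟨c, hc⟩ := exists_pairing_eq_intCast N hw
  have hle : pairing N ((k : ℝ) • x₀ - w) ≥ -1 :=
    hN _ ((mem_image_sub_smul_iff hk'.ne').2 (by simpa [hk'.ne'] using subset_convexHull ℝ _ hx₀))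
  have hNne : (fun i => (N i : ℝ)) ≠ 0 := fun h0 => hN0 (funext fun i => by
    simpa using congr_fun h0 i)
  obtain ⟨q, hq, hqneg⟩ := exists_dotProduct_neg_of_zero_mem_interior h0 hNne
  have hge := hmin _ ((mem_image_sub_smul_iff hk'.ne').1 hq)
  rw [pairing_smul, pairing_add, le_inv_mul_iff₀ hk'] at hge
  rw [← pairing_eq_dotProduct] at hqneg
  simp only [pairing_sub, pairing_smul, he, hc] at hle hge
  -- `c - k e` is an integer in `(0, 1]`
  have hce : (c : ℝ) - k * e = 1 := by
    have h1 : ((c - k * e : ℤ) : ℝ) ≤ 1 := by push_cast; linarith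
    have h2 : (0 : ℝ) < (c - k * e : ℤ) := by push_cast; linarith
    norm_cast at h1 h2
    exact_mod_cast (by omega : c - k * e = 1)
  refine ⟨-e, fun x hx => by simpa [he] using hmin x hx, ?_, w - (k : ℝ) • x₀,
    (latticeSubgroup d).sub_mem hw
      (by exact_mod_cast intCast_smul_mem_latticePoints k (hV hx₀)), ?_⟩
  · push_cast
    linarith
  · rw [pairing_sub, pairing_smul, he, hc]
    exact hce

theorem exists_isFacetPresentation_isGorensteinPoint {P : Set (Fin d → ℝ)}
    (hP : IsLatticePolytope P) (hG : IsGorenstein P) :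
    ∃ (m : ℕ) (n : Fin m → Fin d → ℤ) (h : Fin m → ℤ) (w : Fin d → ℝ) (k : ℤ),
      IsFacetPresentation P n h ∧ IsGorensteinPoint n h w k := by
  classical
  obtain ⟨V, hV, rfl⟩ := hP
  obtain ⟨k, w, hk, hw, ⟨VQ, -, hQ⟩, h0, V', hV', hdual⟩ := hG
  have hk' : (k : ℝ) ≠ 0 := by positivity
  have hVne : V.Nonempty := Finset.coe_nonempty.1 <| convexHull_nonempty_iff.1
    ⟨_, (mem_image_sub_smul_iff hk').1 (interior_subset h0)⟩
  have hnormal : ∀ v ∈ V'.filter (· ≠ 0), ∃ (N : Fin d → ℤ) (H : ℤ), (v = fun i => (N i : ℝ)) ∧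
      (∀ x ∈ convexHull ℝ (V : Set (Fin d → ℝ)), pairing N x ≥ -(H : ℝ)) ∧
      pairing N w + k * H = 1 ∧ ∃ a ∈ latticePoints d, pairing N a = 1 := by
    intro v hv
    obtain ⟨hvV', hv0⟩ := Finset.mem_filter.1 hv
    obtain ⟨N, rfl⟩ := exists_eq_intCast_of_mem_latticePoints (hV' hvV')
    have hN0 : N ≠ 0 := by
      rintro rfl
      exact hv0 (funext fun _ => by simp)
    obtain ⟨H, hH⟩ := exists_height_of_mem_polarDual hV hVne (by omega) hw h0 hN0
      (hdual ▸ subset_convexHull ℝ _ hvV')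
    exact ⟨N, H, rfl, hH⟩
  choose! N H hNv hPH hwH ha using hnormal
  have hPeq : convexHull ℝ (V : Set (Fin d → ℝ)) =
      {x | ∀ v ∈ V'.filter (· ≠ 0), pairing (N v) x ≥ -(H v : ℝ)} := by
    refine Subset.antisymm (fun x hx v hv => hPH v hv x hx) fun x hx => ?_
    have hQx : (k : ℝ) • x - w ∈ (fun x => x - w) '' ((k : ℝ) • convexHull ℝ ↑V) := by
      refine mem_of_polarDual_eq_convexHull (hQ ▸ convex_convexHull ℝ _)
        (hQ ▸ (VQ.finite_toSet.isCompact_convexHull ℝ).isClosed) (interior_subset h0) hdual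
        fun v hv hv0 => ?_
      have hvS : v ∈ V'.filter (· ≠ 0) := Finset.mem_filter.2 ⟨hv, hv0⟩
      rw [hNv v hvS, ← pairing_eq_dotProduct, pairing_sub, pairing_smul]
      nlinarith [hwH v hvS, mul_nonneg (Nat.cast_nonneg k)
        (by linarith [hx v hvS] : 0 ≤ pairing (N v) x + H v)]
    simpa [hk'] using (mem_image_sub_smul_iff hk').1 hQx
  obtain ⟨m, e, he, hF⟩ := exists_isFacetPresentation (V'.filter (· ≠ 0)) N H fun v hv =>
    let ⟨_, ha, hNa⟩ := ha v hv
    gcd_eq_one_of_pairing_eq_one ha hNa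
  exact ⟨m, _, _, w, k, hPeq ▸ hF, hw, fun j => by exact_mod_cast hwH _ (he j)⟩

end Existence

section NearlyGorenstein

variable {d m : ℕ} {n : Fin m → Fin d → ℤ} {h : Fin m → ℤ}

lemma exists_mem_facet {V : Finset (Fin d → ℝ)} (hPV : polyhedron n h = convexHull ℝ ↑V)
    {x₀ : Fin d → ℝ} (hx₀ : x₀ ∈ polyhedron n h) {j : Fin m}
    (hj : ∃ x, pairing (n j) x < -(h j : ℝ) ∧ ∀ i, i ≠ j → pairing (n i) x ≥ -(h i : ℝ)) :
    ∃ v ∈ V, pairing (n j) v = -(h j : ℝ) := by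
  obtain ⟨x, hxj, hx⟩ := hj
  -- the point where the segment from `x₀` to `x` leaves `polyhedron n h`
  set t := (pairing (n j) x₀ + h j) / (pairing (n j) x₀ - pairing (n j) x)
  have hpos : 0 < pairing (n j) x₀ - pairing (n j) x := by linarith [hx₀ j]
  have ht0 : 0 ≤ t := div_nonneg (by linarith [hx₀ j]) hpos.le
  have ht1 : t ≤ 1 := (div_le_one hpos).2 (by linarith)
  have htj : pairing (n j) ((1 - t) • x₀ + t • x) = -(h j : ℝ) := by
    have : t * (pairing (n j) x₀ - pairing (n j) x) = pairing (n j) x₀ + h j :=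
      div_mul_cancel₀ _ hpos.ne'
    simp only [pairing_add, pairing_smul]
    linear_combination (-1 : ℝ) * this
  have hmem : (1 - t) • x₀ + t • x ∈ polyhedron n h := fun i => by
    by_cases hij : i = j
    · subst hij
      exact htj.ge
    · simp only [pairing_add, pairing_smul]
      nlinarith [hx₀ i, hx i hij]
  obtain ⟨v, hv, hvmin⟩ := exists_min_pairing_convexHull
    (Finset.coe_nonempty.1 (convexHull_nonempty_iff.1 ⟨x₀, hPV ▸ hx₀⟩)) (n j)
  refine ⟨v, hv, le_antisymm (htj ▸ hvmin _ (hPV ▸ hmem)) ?_⟩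
  exact (hPV.symm ▸ subset_convexHull ℝ _ hv : v ∈ polyhedron n h) j

lemma exists_decomposition_of_ngIncl (hNG : NGIncl n h) {x : Fin d → ℝ}
    (hx : x ∈ polyhedron n h) (hxl : x ∈ latticePoints d) :
    ∃ (b : ℤ) (y z : Fin d → ℝ), y ∈ latticePoints d ∧ z ∈ latticePoints d ∧ x = y + z ∧
      (∀ i, pairing (n i) y ≥ 1 - b * h i) ∧ ∀ i, pairing (n i) z ≥ (b - 1) * h i - 1 := by
  have hx1 : (x, (1 : ℝ)) ∈ (coneOver n h ∩ latticePairs d) \ {0} :=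
    ⟨⟨fun i => by simpa using hx i, hxl, 1, by simp⟩, by simp⟩
  obtain ⟨⟨y, _⟩, ⟨hy, hyl, b, rfl⟩, ⟨z, _⟩, ⟨hz, hzl, c, rfl⟩, hsum⟩ := hNG hx1
  simp only [Prod.mk_add_mk, Prod.mk.injEq] at hsum
  obtain ⟨rfl, hbc⟩ := hsum
  refine ⟨b, y, z, hyl, hzl, rfl, fun i => ?_, fun i => ?_⟩
  · have := add_one_le_pairing hyl (t := -(b * h i)) (by push_cast; linarith [hy i])
    push_cast at this
    linarith
  · have hc : (c : ℝ) = 1 - b := by linarith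
    have := hz i
    rw [hc] at this
    linarith

lemma isGorensteinPoint_of_le (hb : Bornology.IsBounded (polyhedron n h)) {x : Fin d → ℝ}
    (hx : x ∈ polyhedron n h) {y z : Fin d → ℝ} (hy : y ∈ latticePoints d) {c : ℤ}
    (hyc : ∀ i, pairing (n i) y ≥ 1 - c * h i) (hzc : ∀ i, pairing (n i) z ≥ c * h i - 1) :
    IsGorensteinPoint n h y c := by
  have hyz : y + z = 0 := eq_zero_of_forall_pairing_nonneg hb hx fun i => by
    rw [pairing_add]
    linarith [hyc i, hzc i]
  refine ⟨hy, fun i => ?_⟩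
  have := congr_arg (pairing (n i)) hyz
  rw [pairing_add, pairing_zero] at this
  linarith [hyc i, hzc i]

lemma isGorensteinPoint_of_level_lt (hb : Bornology.IsBounded (polyhedron n h))
    {v y z : Fin d → ℝ} (hv : v ∈ polyhedron n h) (hvl : v ∈ latticePoints d)
    (hyl : y ∈ latticePoints d) {b b' : ℤ} (hlt : b < b')
    (hy : ∀ i, pairing (n i) y ≥ 1 - b * h i) (hz : ∀ i, pairing (n i) z ≥ (b' - 1) * h i - 1) :
    IsGorensteinPoint n h (y + ((b' - 1 - b : ℤ) : ℝ) • v) (b' - 1) := by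
  have ht : (0 : ℝ) ≤ ((b' - 1 - b : ℤ) : ℝ) := by exact_mod_cast (by omega : 0 ≤ b' - 1 - b)
  refine isGorensteinPoint_of_le hb hv
    ((latticeSubgroup d).add_mem hyl (intCast_smul_mem_latticePoints _ hvl)) (z := z)
    (fun i => ?_) (fun i => by push_cast; linarith [hz i])
  simp only [pairing_add, pairing_smul]
  push_cast at ht ⊢
  nlinarith [mul_nonneg ht (by linarith [hv i] : 0 ≤ pairing (n i) v + h i), hy i]

lemma exists_isGorensteinPoint_of_level_eq {V : Finset (Fin d → ℝ)}
    (hPV : polyhedron n h = convexHull ℝ ↑V) (hVne : V.Nonempty)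
    (hind : IsIndecomposable (polyhedron n h)) (hfacet : ∀ j, ∃ v ∈ V, pairing (n j) v = -(h j : ℝ))
    {y z : (Fin d → ℝ) → Fin d → ℝ} (hyl : ∀ v ∈ V, y v ∈ latticePoints d)
    (hzl : ∀ v ∈ V, z v ∈ latticePoints d) (hyz : ∀ v ∈ V, v = y v + z v) {b : ℤ}
    (hy : ∀ v ∈ V, ∀ i, pairing (n i) (y v) ≥ 1 - b * h i)
    (hz : ∀ v ∈ V, ∀ i, pairing (n i) (z v) ≥ (b - 1) * h i - 1) :
    ∃ (w : Fin d → ℝ) (k : ℤ), IsGorensteinPoint n h w k := by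
  classical
  have hsum : polyhedron n h = convexHull ℝ ↑(V.image y) + convexHull ℝ ↑(V.image z) := by
    rw [hPV, Finset.coe_image, Finset.coe_image]
    refine convexHull_eq_convexHull_add_convexHull
      (fun v hv => ⟨y v, mem_image_of_mem y hv, z v, mem_image_of_mem z hv, (hyz v hv).symm⟩) ?_
    rintro _ ⟨_, ⟨u, hu, rfl⟩, _, ⟨u', hu', rfl⟩, rfl⟩
    rw [← hPV]
    intro i
    rw [pairing_add]
    linarith [hy u hu i, hz u' hu' i]
  have hlat : ∀ f : (Fin d → ℝ) → Fin d → ℝ, (∀ v ∈ V, f v ∈ latticePoints d) →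
      IsLatticePolytope (convexHull ℝ ↑(V.image f)) := fun f hf =>
    ⟨V.image f, by rw [Finset.coe_image, image_subset_iff]; exact hf, rfl⟩
  have hconst : ∀ (f : (Fin d → ℝ) → Fin d → ℝ) (p : Fin d → ℝ),
      convexHull ℝ ↑(V.image f) = {p} → ∀ v ∈ V, f v = p := fun f p hp v hv => by
    have := subset_convexHull ℝ _ (Finset.mem_coe.2 (Finset.mem_image_of_mem f hv))
    rwa [hp] at this
  obtain ⟨v₀, hv₀⟩ := hVne
  -- on each facet sits a vertex `v = y v + z v`, forcing equality in both lower bounds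
  rcases hind.2 _ _ (hlat y hyl) (hlat z hzl) hsum with ⟨p, hp⟩ | ⟨p, hp⟩
  · refine ⟨p, b, hconst y p hp v₀ hv₀ ▸ hyl v₀ hv₀, fun j => ?_⟩
    obtain ⟨v, hv, hvj⟩ := hfacet j
    have hsplit := congr_arg (pairing (n j)) (hyz v hv)
    rw [pairing_add, hconst y p hp v hv] at hsplit
    have := hy v hv j
    rw [hconst y p hp v hv] at this
    linarith [hz v hv j]
  · refine ⟨-p, b - 1, (latticeSubgroup d).neg_mem (hconst z p hp v₀ hv₀ ▸ hzl v₀ hv₀),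
      fun j => ?_⟩
    obtain ⟨v, hv, hvj⟩ := hfacet j
    have hsplit := congr_arg (pairing (n j)) (hyz v hv)
    rw [pairing_add, hconst z p hp v hv] at hsplit
    have := hz v hv j
    rw [hconst z p hp v hv] at this
    rw [pairing_neg]
    push_cast
    linarith [hy v hv j]

theorem exists_isGorensteinPoint_of_ngIncl {V : Finset (Fin d → ℝ)}
    (hV : (V : Set (Fin d → ℝ)) ⊆ latticePoints d) (hPV : polyhedron n h = convexHull ℝ ↑V)
    (hne : (polyhedron n h).Nonempty)
    (hirr : ∀ j, ∃ x, pairing (n j) x < -(h j : ℝ) ∧ ∀ i, i ≠ j → pairing (n i) x ≥ -(h i : ℝ))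
    (hind : IsIndecomposable (polyhedron n h)) (hNG : NGIncl n h) :
    ∃ (w : Fin d → ℝ) (k : ℤ), IsGorensteinPoint n h w k := by
  have hb : Bornology.IsBounded (polyhedron n h) := IsLatticePolytope.isBounded ⟨V, hV, hPV⟩
  have hVP : ∀ v ∈ V, v ∈ polyhedron n h := fun v hv => hPV ▸ subset_convexHull ℝ _ hv
  choose! b y z hyl hzl hyz hy hz using fun v (hv : v ∈ V) =>
    exists_decomposition_of_ngIncl hNG (hVP v hv) (hV hv)
  by_cases hlev : ∃ v ∈ V, ∃ u ∈ V, b v < b u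
  · obtain ⟨v, hv, u, hu, hlt⟩ := hlev
    exact ⟨_, _, isGorensteinPoint_of_level_lt hb (hVP v hv) (hV hv) (hyl v hv) hlt (hy v hv)
      (hz u hu)⟩
  push Not at hlev
  obtain ⟨x₀, hx₀⟩ := hne
  have hVne : V.Nonempty := Finset.coe_nonempty.1 (convexHull_nonempty_iff.1 ⟨x₀, hPV ▸ hx₀⟩)
  obtain ⟨v₀, hv₀⟩ := hVne
  have hbv : ∀ v ∈ V, b v = b v₀ := fun v hv => le_antisymm (hlev v₀ hv₀ v hv) (hlev v hv v₀ hv₀)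
  exact exists_isGorensteinPoint_of_level_eq hPV ⟨v₀, hv₀⟩ hind
    (fun j => exists_mem_facet hPV hx₀ (hirr j)) hyl hzl hyz
    (fun v hv => hbv v hv ▸ hy v hv) (fun v hv => hbv v hv ▸ hz v hv)

end NearlyGorenstein

theorem stmt_14 {d : ℕ} (hd : 1 ≤ d) (P : Set (Fin d → ℝ))
    (hP : IsLatticePolytope P) (hfull : (interior P).Nonempty)
    (hind : IsIndecomposable P) :
    NearlyGorenstein P ↔ IsGorenstein P := by
  constructor
  · rintro ⟨m, n, h, ⟨hPn, -, hirr⟩, hNG⟩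
    obtain ⟨V, hV, hPV⟩ := hP
    subst hPn
    have hne := hfull.mono interior_subset
    obtain ⟨w, k, hg⟩ := exists_isGorensteinPoint_of_ngIncl hV hPV hne hirr hind hNG
    exact hg.isGorenstein hd ⟨V, hV, hPV⟩ hne.some_mem
  · intro hG
    obtain ⟨m, n, h, w, k, hF, hg⟩ := exists_isFacetPresentation_isGorensteinPoint hP hG
    exact ⟨m, n, h, hF, hg.ngIncl⟩
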